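/- arXiv:2604.04754 — 4 statements merged into one kernel-verified Lean document; each statement's English description precedes it below -/
import Mathlib

section
/- For any integers n ≥ 1 and T ≥ 2n+1, any symmetric matrix H ∈ ℝ^{n×n}, any t ∈ ℤ, the sum (1/T) Σ_{j=t}^{t+T-1} M(j) S(j)^T H S(j) = 0, where S and M are the sinusoidal dither and demodulation vectors with frequencies ω_i = 2πi/T. -/
/-!
Each summand `j ↦ (S j ⬝ᵥ H *ᵥ S j) • M j` is `T`-periodic on `ℤ` and odd, because `S` and `M`
are: the quadratic form is even in `S j` and `M j` changes sign. Periodicity lets the window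
`t, …, t + T - 1` be replaced by `1 - T, …, 0`, which is the mirror image of `0, …, T - 1`; so the
window sum equals its own negative.
-/

open Finset Real Matrix

namespace Function

variable {β : Type*} [AddCommGroup β] {f : ℤ → β} {T : ℕ}

theorem Periodic.sum_range_add_one (hf : Periodic f T) (t : ℤ) :
    ∑ j ∈ range T, f (t + 1 + j) = ∑ j ∈ range T, f (t + j) := by
  have h := sum_range_succ (fun j : ℕ => f (t + j)) T
  rw [sum_range_succ', hf t] at h
  simpa [add_assoc, add_comm (1 : ℤ)] using h

theorem Periodic.sum_range_add (hf : Periodic f T) (t : ℤ) :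
    ∑ j ∈ range T, f (t + j) = ∑ j ∈ range T, f j := by
  induction t with
  | zero => simp
  | succ t ih => rw [hf.sum_range_add_one, ih]
  | pred t ih => rw [← ih, ← hf.sum_range_add_one, sub_add_cancel]

theorem Odd.sum_range_add_eq_zero_of_periodic [IsAddTorsionFree β] (ho : f.Odd)
    (hp : Periodic f T) (t : ℤ) : ∑ j ∈ range T, f (t + j) = 0 := by
  rw [hp.sum_range_add, ← neg_eq_self, ← sum_neg_distrib]
  calc ∑ j ∈ range T, -f j
      = ∑ j ∈ range T, f (1 - T + (T - 1 - j : ℕ)) := by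
        refine sum_congr rfl fun j hj => ?_
        rw [← ho.eq]
        congr 1
        have : j < T := mem_range.mp hj
        omega
    _ = ∑ j ∈ range T, f (1 - T + j) := sum_range_reflect (fun j : ℕ => f (1 - T + j)) T
    _ = ∑ j ∈ range T, f j := hp.sum_range_add _

end Function

noncomputable def sinusoid {ι : Type*} (T : ℕ) (c : ι → ℝ) (m : ι → ℤ) (s : ℤ) (i : ι) : ℝ :=
  c i * sin (2 * π * m i / T * s)

section sinusoid

variable {ι : Type*} (T : ℕ) (c : ι → ℝ) (m : ι → ℤ)

theorem periodic_sinusoid : Function.Periodic (sinusoid T c m) T := by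
  intro s
  funext i
  rcases eq_or_ne T 0 with rfl | hT
  · simp
  · have hθ : 2 * π * m i / T * ((s + T : ℤ) : ℝ) = 2 * π * m i / T * s + m i * (2 * π) := by
      push_cast
      field_simp
    simp only [sinusoid, hθ, sin_add_int_mul_two_pi]

theorem odd_sinusoid : Function.Odd (sinusoid T c m) := by
  intro s
  funext i
  simp [sinusoid]

end sinusoid

section quadratic

variable {ι : Type*} [Fintype ι] (H : Matrix ι ι ℝ) {S M : ℤ → ι → ℝ} {T : ℕ}

theorem periodic_quadratic_smul (hS : Function.Periodic S T) (hM : Function.Periodic M T) :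
    Function.Periodic (fun s => (S s ⬝ᵥ H *ᵥ S s) • M s) T := fun s => by
  simp only [hS s, hM s]

theorem odd_quadratic_smul (hS : S.Odd) (hM : M.Odd) :
    Function.Odd (fun s => (S s ⬝ᵥ H *ᵥ S s) • M s) := fun s => by
  simp only [hS s, hM s, Matrix.mulVec_neg, neg_dotProduct, dotProduct_neg, neg_neg,
    smul_neg]

end quadratic

theorem stmt_2_general (n T : ℕ)
    (H : Matrix (Fin n) (Fin n) ℝ)
    (a : Fin n → ℝ)
    (S M : ℤ → Fin n → ℝ)
    (hS : ∀ (s : ℤ) (i : Fin n),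
      S s i = a i * Real.sin (2 * Real.pi * ((i : ℕ) + 1) / T * (s : ℝ)))
    (hM : ∀ (s : ℤ) (i : Fin n),
      M s i = (2 / a i) * Real.sin (2 * Real.pi * ((i : ℕ) + 1) / T * (s : ℝ)))
    (t : ℤ) :
    (1 / (T : ℝ)) • ∑ j ∈ Finset.range T,
        (dotProduct (S (t + j)) (H.mulVec (S (t + j)))) • M (t + j)
      = (0 : Fin n → ℝ) := by
  have hS' : S = sinusoid T a (fun i => i + 1) := funext₂ fun s i => by simp [hS, sinusoid]
  have hM' : M = sinusoid T (fun i => 2 / a i) (fun i => i + 1) :=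
    funext₂ fun s i => by simp [hM, sinusoid]
  subst hS' hM'
  rw [(odd_quadratic_smul H (odd_sinusoid _ _ _) (odd_sinusoid _ _ _)).sum_range_add_eq_zero_of_periodic
    (periodic_quadratic_smul H (periodic_sinusoid _ _ _) (periodic_sinusoid _ _ _)) t, smul_zero]

/-- The average over any window of length T of M(j) S(j)ᵀ H S(j) is the zero vector,
for any symmetric H. -/
theorem stmt_2 (n T : ℕ) (hn : 1 ≤ n) (hT : 2 * n + 1 ≤ T)
    (H : Matrix (Fin n) (Fin n) ℝ) (hH : H.IsSymm)
    (a : Fin n → ℝ) (ha : ∀ i, a i ≠ 0)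
    (S M : ℤ → Fin n → ℝ)
    (hS : ∀ (s : ℤ) (i : Fin n),
      S s i = a i * Real.sin (2 * Real.pi * ((i : ℕ) + 1) / T * (s : ℝ)))
    (hM : ∀ (s : ℤ) (i : Fin n),
      M s i = (2 / a i) * Real.sin (2 * Real.pi * ((i : ℕ) + 1) / T * (s : ℝ)))
    (t : ℤ) :
    (1 / (T : ℝ)) • ∑ j ∈ Finset.range T,
        (dotProduct (S (t + j)) (H.mulVec (S (t + j)))) • M (t + j)
      = (0 : Fin n → ℝ) :=
  stmt_2_general n T H a S M hS hM t
end

section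
/- Let T ∈ ℕ, T ≥ 2, and ω = 2πm/T with m ∈ {1,…,T−1}. Then for every j ∈ ℤ, the weighted sum (1/T) Σ_{s=j}^{j+T−1} (j+T−s) sin(ω s) equals cos((2j−1)ω/2) / (2 sin(ω/2)). -/
/-!
Multiplying by `2 sin (ω/2)` and using `2 sin (ω/2) sin u = cos (u - ω/2) - cos (u + ω/2)`, the
weighted sum telescopes by Abel summation to `T cos (ω j - ω/2)` minus an unweighted sum of
cosines over the full period `T ω = 2π m`, which vanishes.
-/

open Finset Real

theorem two_mul_sin_half_mul_sum_range_sub_mul_sin (n : ℕ) (a b : ℝ) :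
    2 * sin (a / 2) * ∑ i ∈ range n, ((n : ℝ) - i) * sin (a * i + b)
      = n * cos (b - a / 2) - ∑ i ∈ range n, cos (a * i + (b + a / 2)) := by
  set g : ℕ → ℝ := fun k ↦ ((n : ℝ) - k) * cos (a * k + b - a / 2)
  calc 2 * sin (a / 2) * ∑ i ∈ range n, ((n : ℝ) - i) * sin (a * i + b)
      = ∑ i ∈ range n, ((g i - g (i + 1)) - cos (a * i + (b + a / 2))) := by
        rw [mul_sum]
        refine sum_congr rfl fun i _ ↦ ?_
        rw [mul_left_comm, two_mul_sin_mul_sin, ← cos_neg]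
        simp only [g]
        push_cast
        ring_nf
    _ = n * cos (b - a / 2) - ∑ i ∈ range n, cos (a * i + (b + a / 2)) := by
        rw [sum_sub_distrib, sum_range_sub']
        simp [g]

theorem sum_range_cos_eq_zero_of_mul_eq_two_pi_mul (n m : ℕ) {a : ℝ} (ha : sin (a / 2) ≠ 0)
    (hna : n * a = 2 * π * m) (b : ℝ) : ∑ i ∈ range n, cos (a * i + b) = 0 := by
  have h := sin_mul_sum_cos n a b
  rw [hna, show 2 * π * m / 2 = m * π by ring, sin_nat_mul_pi, zero_mul] at h
  exact (mul_eq_zero.mp h).resolve_left ha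

theorem stmt_3_general (T : ℕ) (m : ℕ) (hm1 : 1 ≤ m) (hm2 : m ≤ T - 1) (j : ℤ) :
    (1 / (T : ℝ)) * ∑ i ∈ Finset.range T,
        ((T : ℝ) - i) * Real.sin (2 * Real.pi * m / T * ((j : ℝ) + i))
      = Real.cos ((2 * (j : ℝ) - 1) * (2 * Real.pi * m / T) / 2)
          / (2 * Real.sin ((2 * Real.pi * m / T) / 2)) := by
  have hm : (0 : ℝ) < m := by exact_mod_cast hm1
  have hmT : (m : ℝ) < T := by exact_mod_cast (show m < T by omega)
  have hT : (0 : ℝ) < T := hm.trans hmT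
  set a := 2 * π * m / T with ha
  have hsin : 0 < sin (a / 2) := by
    refine sin_pos_of_pos_of_lt_pi (by positivity) ?_
    rw [ha, show 2 * π * m / T / 2 = π * (m / T) by ring]
    exact mul_lt_of_lt_one_right pi_pos ((div_lt_one hT).mpr hmT)
  have hcos : ∑ i ∈ range T, cos (a * i + (a * j + a / 2)) = 0 :=
    sum_range_cos_eq_zero_of_mul_eq_two_pi_mul T m hsin.ne' (by rw [ha]; field_simp) _
  have hsum := two_mul_sin_half_mul_sum_range_sub_mul_sin T a (a * j)
  rw [hcos, sub_zero] at hsum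
  have hterm (i : ℕ) : sin (a * (j + i)) = sin (a * i + a * j) := by ring_nf
  simp_rw [hterm]
  rw [show (2 * (j : ℝ) - 1) * a / 2 = a * j - a / 2 by ring, eq_div_iff (by positivity),
    ← mul_right_inj' hT.ne', ← hsum]
  field_simp

/-- Closed form of the linearly weighted sum of a sampled sinusoid over one period. -/
theorem stmt_3 (T : ℕ) (hT : 2 ≤ T) (m : ℕ) (hm1 : 1 ≤ m) (hm2 : m ≤ T - 1) (j : ℤ) :
    (1 / (T : ℝ)) * ∑ i ∈ Finset.range T,
        ((T : ℝ) - i) * Real.sin (2 * Real.pi * m / T * ((j : ℝ) + i))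
      = Real.cos ((2 * (j : ℝ) - 1) * (2 * Real.pi * m / T) / 2)
          / (2 * Real.sin ((2 * Real.pi * m / T) / 2)) :=
  stmt_3_general T m hm1 hm2 j
end

section
/- Let 0 < ε ω_h < 1 and 0 < ελ < 1 with |1 − ελ|² > |1 − ε ω_h|. Suppose η̃ : ℕ → ℝ satisfies η̃(j+1) = η̃(j) − ε ω_h (η̃(j) − u(j)) for j ≥ D, with |u(j)| ≤ σ_y (1 − ελ)^{2j} for all j ≥ D and |η̃(D)| ≤ Δ_Q. Then for all j ≥ D: |η̃(j)| ≤ Δ_Q |1 − ε ω_h|^{j−D} + ε ω_h σ_y (1−ελ)^{2j} / ((1−ελ)² − |1 − ε ω_h|), and in particular |η̃(j)| ≤ [Δ_Q |1−εω_h|^{−D} + ε ω_h σ_y/((1−ελ)² − |1−εω_h|)] (1−ελ)^{2j}. -/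
/-- High-pass filter error bound in the unbiased ES scheme. -/
theorem stmt_9 (ε ωh lam σy ΔQ : ℝ) (D : ℕ) (η u : ℕ → ℝ)
    (hε : 0 < ε) (hωh : 0 < ωh) (hlam : 0 < lam)
    (hεωh : ε * ωh < 1) (hεlam : ε * lam < 1)
    (hσy : 0 ≤ σy) (hΔQ : 0 ≤ ΔQ)
    (hdecay : (1 - ε * lam) ^ 2 > |1 - ε * ωh|)
    (hrec : ∀ j : ℕ, D ≤ j → η (j + 1) = η j - ε * ωh * (η j - u j))
    (hu : ∀ j : ℕ, D ≤ j → |u j| ≤ σy * (1 - ε * lam) ^ (2 * j))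
    (hinit : |η D| ≤ ΔQ) :
    ∀ j : ℕ, D ≤ j →
      |η j| ≤ ΔQ * |1 - ε * ωh| ^ (j - D)
          + ε * ωh * σy * (1 - ε * lam) ^ (2 * j) / ((1 - ε * lam) ^ 2 - |1 - ε * ωh|) ∧
      |η j| ≤ (ΔQ * |1 - ε * ωh| ^ (-(D : ℤ))
          + ε * ωh * σy / ((1 - ε * lam) ^ 2 - |1 - ε * ωh|)) * (1 - ε * lam) ^ (2 * j) := by
  have hεωh0 : 0 < ε * ωh := mul_pos hε hωh
  have ha0 : 0 < 1 - ε * ωh := by linarith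
  have habs : |1 - ε * ωh| = 1 - ε * ωh := abs_of_pos ha0
  set a : ℝ := 1 - ε * ωh with ha
  have hl0 : 0 < 1 - ε * lam := by nlinarith
  set s : ℝ := 1 - ε * lam with hs
  have hr0 : 0 < s ^ 2 := pow_pos hl0 2
  rw [habs] at hdecay ⊢
  have hra : 0 < s ^ 2 - a := by linarith
  have hC : 0 ≤ ε * ωh * σy / (s ^ 2 - a) := by positivity
  clear_value a s
  -- main bound by induction
  have main : ∀ j : ℕ, D ≤ j →
      |η j| ≤ ΔQ * a ^ (j - D) + ε * ωh * σy * s ^ (2 * j) / (s ^ 2 - a) := by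
    intro j hj
    induction j, hj using Nat.le_induction with
    | base =>
      simp only [Nat.sub_self, pow_zero, mul_one]
      have : 0 ≤ ε * ωh * σy * s ^ (2 * D) / (s ^ 2 - a) := by positivity
      linarith
    | succ j hj ih =>
      have hrec' := hrec j hj
      have hstep : |η (j + 1)| ≤ a * |η j| + ε * ωh * |u j| := by
        have : η (j + 1) = a * η j + ε * ωh * u j := by rw [hrec', ha]; ring
        rw [this]
        calc |a * η j + ε * ωh * u j| ≤ |a * η j| + |ε * ωh * u j| := abs_add_le _ _
          _ = a * |η j| + ε * ωh * |u j| := by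
              rw [abs_mul, abs_mul, abs_of_pos ha0, abs_of_pos hεωh0]
      have hu' := hu j hj
      have hsub : j + 1 - D = (j - D) + 1 := by omega
      have hpow : s ^ (2 * (j + 1)) = s ^ (2 * j) * s ^ 2 := by
        rw [← pow_add]; ring_nf
      have key : a * (ΔQ * a ^ (j - D) + ε * ωh * σy * s ^ (2 * j) / (s ^ 2 - a))
            + ε * ωh * (σy * s ^ (2 * j))
          = ΔQ * a ^ (j + 1 - D) + ε * ωh * σy * s ^ (2 * (j + 1)) / (s ^ 2 - a) := by
        have hx : a * (ε * ωh * σy * s ^ (2 * j) / (s ^ 2 - a)) + ε * ωh * (σy * s ^ (2 * j))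
            = ε * ωh * σy * s ^ (2 * (j + 1)) / (s ^ 2 - a) := by
          rw [hpow, eq_div_iff hra.ne']
          field_simp
          ring
        calc a * (ΔQ * a ^ (j - D) + ε * ωh * σy * s ^ (2 * j) / (s ^ 2 - a))
              + ε * ωh * (σy * s ^ (2 * j))
            = ΔQ * (a ^ (j - D) * a)
              + (a * (ε * ωh * σy * s ^ (2 * j) / (s ^ 2 - a)) + ε * ωh * (σy * s ^ (2 * j))) := by
              ring
          _ = ΔQ * a ^ (j + 1 - D) + ε * ωh * σy * s ^ (2 * (j + 1)) / (s ^ 2 - a) := by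
              rw [hx, hsub]; ring
      have h1 : a * |η j| ≤ a * (ΔQ * a ^ (j - D) + ε * ωh * σy * s ^ (2 * j) / (s ^ 2 - a)) :=
        mul_le_mul_of_nonneg_left ih ha0.le
      have h2 : ε * ωh * |u j| ≤ ε * ωh * (σy * s ^ (2 * j)) :=
        mul_le_mul_of_nonneg_left hu' hεωh0.le
      have h3 := add_le_add h1 h2
      rw [key] at h3
      exact hstep.trans h3
  intro j hj
  have hm := main j hj
  refine ⟨hm, ?_⟩
  -- second bound
  have haj : a ^ (j - D) ≤ a ^ (-(D : ℤ)) * s ^ (2 * j) := by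
    have hzp : a ^ (-(D : ℤ)) = (a ^ D)⁻¹ := by
      rw [zpow_neg, zpow_natCast]
    rw [hzp]
    rw [inv_mul_eq_div, le_div_iff₀ (pow_pos ha0 D)]
    have : a ^ (j - D) * a ^ D = a ^ j := by
      rw [← pow_add]; congr 1; omega
    rw [this]
    calc a ^ j ≤ (s ^ 2) ^ j := pow_le_pow_left₀ ha0.le hdecay.le j
      _ = s ^ (2 * j) := by rw [← pow_mul]
  have h1 : ΔQ * a ^ (j - D) ≤ ΔQ * a ^ (-(D : ℤ)) * s ^ (2 * j) := by
    calc ΔQ * a ^ (j - D) ≤ ΔQ * (a ^ (-(D : ℤ)) * s ^ (2 * j)) :=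
          mul_le_mul_of_nonneg_left haj hΔQ
      _ = ΔQ * a ^ (-(D : ℤ)) * s ^ (2 * j) := by ring
  have h2 : ε * ωh * σy * s ^ (2 * j) / (s ^ 2 - a)
      = ε * ωh * σy / (s ^ 2 - a) * s ^ (2 * j) := by ring
  calc |η j| ≤ ΔQ * a ^ (j - D) + ε * ωh * σy * s ^ (2 * j) / (s ^ 2 - a) := hm
    _ ≤ ΔQ * a ^ (-(D : ℤ)) * s ^ (2 * j) + ε * ωh * σy / (s ^ 2 - a) * s ^ (2 * j) := by
        rw [h2] at *; linarith
    _ = (ΔQ * a ^ (-(D : ℤ)) + ε * ωh * σy / (s ^ 2 - a)) * s ^ (2 * j) := by ring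
end

section
/- Let T ≥ 2 and ω = 2πm/T with m ∈ {1,…,T−1}. Define f(j) = (1/T) Σ_{s=j}^{j+T−1} (j+T−s) cos(ω s). Then |f(j)| ≤ 1/(2 sin(ω/2)) for all j ∈ ℤ. -/
open Finset

lemma cos_telescope (ω θ : ℝ) (n : ℕ) :
    2 * Real.sin (ω/2) * ∑ i ∈ range n, Real.cos (θ + i * ω)
      = Real.sin (θ + ((n : ℝ) - 1/2) * ω) - Real.sin (θ - ω/2) := by
  induction n with
  | zero =>
    simp only [range_zero, sum_empty, mul_zero, Nat.cast_zero]
    rw [show θ + ((0:ℝ) - 1/2) * ω = θ - ω/2 by ring]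
    ring
  | succ n ih =>
    rw [sum_range_succ, mul_add, ih]
    push_cast
    rw [show θ + ((n:ℝ) + 1 - 1/2) * ω = (θ + n*ω) + ω/2 by ring,
        show θ + ((n:ℝ) - 1/2) * ω = (θ + n*ω) - ω/2 by ring,
        Real.sin_add, Real.sin_sub]
    ring

lemma sin_telescope (ω θ : ℝ) (n : ℕ) :
    2 * Real.sin (ω/2) * ∑ i ∈ range n, Real.sin (θ + i * ω)
      = Real.cos (θ - ω/2) - Real.cos (θ + ((n : ℝ) - 1/2) * ω) := by
  induction n with
  | zero =>
    simp only [range_zero, sum_empty, mul_zero, Nat.cast_zero]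
    rw [show θ + ((0:ℝ) - 1/2) * ω = θ - ω/2 by ring]
    ring
  | succ n ih =>
    rw [sum_range_succ, mul_add, ih]
    push_cast
    rw [show θ + ((n:ℝ) + 1 - 1/2) * ω = (θ + n*ω) + ω/2 by ring,
        show θ + ((n:ℝ) - 1/2) * ω = (θ + n*ω) - ω/2 by ring,
      ]
    simp only [Real.cos_add, Real.cos_sub]
    ring

lemma weighted_eq (a : ℕ → ℝ) (n : ℕ) :
    ∑ i ∈ range n, ((n:ℝ) - i) * a i = ∑ k ∈ range n, ∑ i ∈ range (k+1), a i := by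
  induction n with
  | zero => simp
  | succ n ih =>
    rw [sum_range_succ (f := fun k => ∑ i ∈ range (k+1), a i), ← ih, sum_range_succ,
        sum_range_succ]
    have h : ∑ i ∈ range n, (((n:ℕ)+1 : ℝ) - i) * a i
        = (∑ i ∈ range n, ((n:ℝ) - i) * a i) + ∑ i ∈ range n, a i := by
      rw [← Finset.sum_add_distrib]
      exact Finset.sum_congr rfl fun i _ => by ring
    push_cast at h ⊢
    rw [h]
    ring

/-- Bound on the linearly weighted average of a sampled cosine over one period. -/
theorem stmt_11 (T : ℕ) (hT : 2 ≤ T) (m : ℕ) (hm1 : 1 ≤ m) (hm2 : m ≤ T - 1) (j : ℤ) :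
    |(1 / (T : ℝ)) * ∑ i ∈ Finset.range T,
        ((T : ℝ) - i) * Real.cos (2 * Real.pi * m / T * ((j : ℝ) + i))|
      ≤ 1 / (2 * Real.sin ((2 * Real.pi * m / T) / 2)) := by
  set ω : ℝ := 2 * Real.pi * m / T with hω
  have hT0 : (0:ℝ) < T := by positivity
  have hmT : (m:ℝ) < T := by
    have : m < T := lt_of_le_of_lt hm2 (Nat.sub_lt (by omega) one_pos)
    exact_mod_cast this
  have hm0 : (0:ℝ) < m := by exact_mod_cast hm1
  have hs : 0 < Real.sin (ω/2) := by
    have hh : ω/2 = Real.pi * m / T := by rw [hω]; ring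
    rw [hh]
    apply Real.sin_pos_of_pos_of_lt_pi
    · positivity
    · rw [div_lt_iff₀ hT0]
      have := Real.pi_pos
      nlinarith
  set θ : ℝ := ω * j with hθ
  have hterm : ∀ i : ℕ, Real.cos (ω * ((j:ℝ)+i)) = Real.cos (θ + i*ω) := by
    intro i; rw [hθ]; ring_nf
  have hTω : (T:ℝ) * ω = (m:ℝ) * (2 * Real.pi) := by
    rw [hω]; field_simp
  -- the full-period sine sum vanishes
  have hzero : ∑ k ∈ range T, Real.sin ((θ + ω/2) + k * ω) = 0 := by
    have h := sin_telescope ω (θ + ω/2) T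
    have harg : (θ + ω/2) + ((T:ℝ) - 1/2) * ω = θ + (T:ℝ) * ω := by ring
    rw [harg, hTω] at h
    rw [show θ + (m:ℝ) * (2 * Real.pi) = θ + (m:ℤ) * (2 * Real.pi) by push_cast; ring,
        Real.cos_add_int_mul_two_pi] at h
    have h2 : (θ + ω/2) - ω/2 = θ := by ring
    rw [h2, sub_self] at h
    have hne : 2 * Real.sin (ω/2) ≠ 0 := by positivity
    exact (mul_eq_zero.mp h).resolve_left hne
  have key : 2 * Real.sin (ω/2) * ∑ i ∈ range T, ((T : ℝ) - i) * Real.cos (ω * ((j:ℝ)+i))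
      = -(T:ℝ) * Real.sin (θ - ω/2) := by
    have hsum : ∑ i ∈ range T, ((T : ℝ) - i) * Real.cos (ω * ((j:ℝ)+i))
        = ∑ k ∈ range T, ∑ i ∈ range (k+1), Real.cos (θ + i*ω) := by
      rw [show (fun i : ℕ => ((T : ℝ) - i) * Real.cos (ω * ((j:ℝ)+i)))
            = fun i : ℕ => ((T : ℝ) - i) * Real.cos (θ + i*ω) from funext fun i => by
              rw [hterm i]]
      exact weighted_eq _ T
    rw [hsum, Finset.mul_sum]
    have hinner : ∀ k ∈ range T,
        2 * Real.sin (ω/2) * ∑ i ∈ range (k+1), Real.cos (θ + i*ω)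
          = Real.sin ((θ + ω/2) + k * ω) - Real.sin (θ - ω/2) := by
      intro k _
      rw [cos_telescope ω θ (k+1)]
      push_cast
      rw [show θ + ((k:ℝ) + 1 - 1/2) * ω = (θ + ω/2) + k * ω by ring]
    rw [Finset.sum_congr rfl hinner, Finset.sum_sub_distrib, hzero,
        Finset.sum_const, card_range, zero_sub, nsmul_eq_mul]
    ring
  have hsumval : ∑ i ∈ range T, ((T : ℝ) - i) * Real.cos (ω * ((j:ℝ)+i))
      = -(T:ℝ) * Real.sin (θ - ω/2) / (2 * Real.sin (ω/2)) := by
    rw [eq_div_iff (by positivity : (2 * Real.sin (ω/2)) ≠ 0)]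
    linear_combination key
  calc |(1 / (T : ℝ)) * ∑ i ∈ Finset.range T, ((T : ℝ) - i) * Real.cos (ω * ((j : ℝ) + i))|
      = |Real.sin (θ - ω/2)| / (2 * Real.sin (ω/2)) := by
        have heq : (1/(T:ℝ)) * (-(T:ℝ) * Real.sin (θ - ω/2) / (2 * Real.sin (ω/2)))
            = -Real.sin (θ - ω/2) / (2 * Real.sin (ω/2)) := by
          field_simp
        rw [hsumval, heq, abs_div, abs_neg,
            abs_of_pos (show (0:ℝ) < 2 * Real.sin (ω/2) by positivity)]
    _ ≤ 1 / (2 * Real.sin (ω/2)) := by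
        gcongr
        exact abs_le.mpr ⟨Real.neg_one_le_sin _, Real.sin_le_one _⟩
end
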